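/- arXiv:2603.08452 — 3 statements merged into one kernel-verified Lean document; each statement's English description precedes it below -/
import Mathlib

section
/- The group Γ = ⟨a, b ∣ a⁹ = 1, b⁹ = 1, b a b⁻¹ = a⁴, a b a⁻¹ = b⁴⟩ has order exactly 27 and is nonabelian of exponent 9; in particular it is not isomorphic to the Heisenberg group over ℤ/3ℤ (which has exponent 3). -/
def pol2Rels : Set (FreeGroup (Fin 2)) :=
  {FreeGroup.of 0 ^ 9, FreeGroup.of 1 ^ 9,
   FreeGroup.of 1 * FreeGroup.of 0 * (FreeGroup.of 1)⁻¹ * (FreeGroup.of 0 ^ 4)⁻¹,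
   FreeGroup.of 0 * FreeGroup.of 1 * (FreeGroup.of 0)⁻¹ * (FreeGroup.of 1 ^ 4)⁻¹}

/-- The Heisenberg group over `ℤ/3ℤ`: upper unitriangular `3 × 3` matrices,
modelled as triples `(a, b, c)` (entries `(1,2)`, `(2,3)`, `(1,3)`) with the
multiplication induced by matrix multiplication. -/
def Heis3 : Type := ZMod 3 × ZMod 3 × ZMod 3

instance : Group Heis3 where
  mul x y := (x.1 + y.1, x.2.1 + y.2.1, x.2.2 + y.2.2 + x.1 * y.2.1)
  one := ((0 : ZMod 3), (0 : ZMod 3), (0 : ZMod 3))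
  inv x := (-x.1, -x.2.1, -x.2.2 + x.1 * x.2.1)
  mul_assoc := by
    rintro ⟨a, b, c⟩ ⟨d, e, f⟩ ⟨g, h, i⟩
    show ((a + d + g, b + e + h, c + f + a * e + i + (a + d) * h) :
        ZMod 3 × ZMod 3 × ZMod 3) =
      (a + (d + g), b + (e + h), c + (f + i + d * h) + a * (e + h))
    exact Prod.ext (by ring) (Prod.ext (by ring) (by ring))
  one_mul := by
    rintro ⟨a, b, c⟩
    show ((0 + a, 0 + b, 0 + c + 0 * b) : ZMod 3 × ZMod 3 × ZMod 3) = (a, b, c)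
    exact Prod.ext (by ring) (Prod.ext (by ring) (by ring))
  mul_one := by
    rintro ⟨a, b, c⟩
    show ((a + 0, b + 0, c + 0 + a * 0) : ZMod 3 × ZMod 3 × ZMod 3) = (a, b, c)
    exact Prod.ext (by ring) (Prod.ext (by ring) (by ring))
  inv_mul_cancel := by
    rintro ⟨a, b, c⟩
    show ((-a + a, -b + b, -c + a * b + c + -a * b) : ZMod 3 × ZMod 3 × ZMod 3) =
      ((0 : ZMod 3), (0 : ZMod 3), (0 : ZMod 3))
    exact Prod.ext (by ring) (Prod.ext (by ring) (by ring))


/-! The relation `b a b⁻¹ = a⁴` lets every element of `Γ` be written `a ^ i * b ^ j`, and the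
relations together force `b ^ 3 = a ^ 6`, so `i < 9` and `j < 3` suffice: `|Γ| ≤ 27`. Conversely
`a ↦ (1, 0)`, `b ↦ (2, 1)` is a surjection onto `ℤ/9 ⋊ ℤ/3`, a nonabelian group of order 27 and
exponent 9, so `Γ` is isomorphic to it; the Heisenberg group over `ℤ/3ℤ` has exponent 3. -/

section Metacyclic

variable {G : Type*} [Group G] {a b : G} {k : ℕ}

theorem SemiconjBy.pow_left_pow_right (h : SemiconjBy b a (a ^ k)) (j i : ℕ) :
    SemiconjBy (b ^ j) (a ^ i) (a ^ (k ^ j * i)) := by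
  rw [pow_mul]
  refine SemiconjBy.pow_right ?_ i
  induction j with
  | zero => simp
  | succ j ih =>
    rw [pow_succ, pow_succ, pow_mul]
    exact (ih.pow_right k).mul_left h

theorem exists_eq_pow_mul_pow_of_mem_closure (h : SemiconjBy b a (a ^ k)) {g : G}
    (hg : g ∈ Submonoid.closure {a, b}) : ∃ i j : ℕ, g = a ^ i * b ^ j := by
  induction hg using Submonoid.closure_induction_right with
  | one => exact ⟨0, 0, by simp⟩
  | mul_right x _ y hy ih =>
    obtain ⟨i, j, rfl⟩ := ih
    rcases hy with rfl | rfl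
    · refine ⟨i + k ^ j, j, ?_⟩
      have hcomm := (h.pow_left_pow_right j 1).eq
      rw [pow_one, mul_one] at hcomm
      rw [mul_assoc, hcomm, ← mul_assoc, pow_add]
    · exact ⟨i, j + 1, by rw [mul_assoc, pow_succ]⟩

theorem surjective_pow_mul_pow_of_closure_pair_eq_top {m n r : ℕ} (hm : 0 < m) (hn : 0 < n)
    (hab : Subgroup.closure {a, b} = ⊤) (h : SemiconjBy b a (a ^ k)) (ha : a ^ m = 1)
    (hb : b ^ n = a ^ r) :
    Function.Surjective fun p : Fin m × Fin n => a ^ (p.1 : ℕ) * b ^ (p.2 : ℕ) := by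
  have ha_fin : IsOfFinOrder a := isOfFinOrder_iff_pow_eq_one.2 ⟨m, hm, ha⟩
  have hb_fin : IsOfFinOrder b := isOfFinOrder_iff_pow_eq_one.2
    ⟨n * m, by positivity, by rw [pow_mul, hb, ← pow_mul, mul_comm, pow_mul, ha, one_pow]⟩
  intro g
  have hg : g ∈ Submonoid.closure {a, b} := by
    rw [← Subgroup.closure_toSubmonoid_of_isOfFinOrder (by simp [ha_fin, hb_fin]), hab]
    trivial
  obtain ⟨i, j, rfl⟩ := exists_eq_pow_mul_pow_of_mem_closure h hg
  refine ⟨(⟨(i + r * (j / n)) % m, Nat.mod_lt _ hm⟩, ⟨j % n, Nat.mod_lt _ hn⟩), ?_⟩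
  calc a ^ ((i + r * (j / n)) % m) * b ^ (j % n) = a ^ i * (a ^ r) ^ (j / n) * b ^ (j % n) := by
        rw [← pow_eq_pow_mod _ ha, pow_add, pow_mul]
    _ = a ^ i * b ^ j := by rw [← hb, ← pow_mul, mul_assoc, ← pow_add, Nat.div_add_mod]

end Metacyclic

local notation "Γ" => PresentedGroup pol2Rels

namespace Pol2

def a : Γ := PresentedGroup.of 0

def b : Γ := PresentedGroup.of 1

theorem a_pow_nine : a ^ 9 = 1 := by
  have h := PresentedGroup.one_of_mem (rels := pol2Rels) (x := FreeGroup.of 0 ^ 9)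
    (by simp [pol2Rels])
  rwa [map_pow] at h

theorem b_mul_a : b * a = a ^ 4 * b := by
  have h := PresentedGroup.mk_eq_mk_of_mul_inv_mem (rels := pol2Rels)
    (x := FreeGroup.of 1 * FreeGroup.of 0 * (FreeGroup.of 1)⁻¹) (y := FreeGroup.of 0 ^ 4)
    (by simp [pol2Rels])
  rw [map_mul, map_mul, map_inv, map_pow] at h
  exact mul_inv_eq_iff_eq_mul.1 h

theorem a_mul_b : a * b = b ^ 4 * a := by
  have h := PresentedGroup.mk_eq_mk_of_mul_inv_mem (rels := pol2Rels)
    (x := FreeGroup.of 0 * FreeGroup.of 1 * (FreeGroup.of 0)⁻¹) (y := FreeGroup.of 1 ^ 4)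
    (by simp [pol2Rels])
  rw [map_mul, map_mul, map_inv, map_pow] at h
  exact mul_inv_eq_iff_eq_mul.1 h

theorem b_pow_three : b ^ 3 = a ^ 6 := by
  have h : b ^ 3 * a ^ 4 = a := by
    apply mul_right_cancel (b := b)
    rw [mul_assoc, ← b_mul_a, ← mul_assoc, ← pow_succ, a_mul_b]
  calc b ^ 3 = a * (a ^ 4)⁻¹ := eq_mul_inv_of_mul_eq h
    _ = a ^ 6 * (a ^ 9)⁻¹ := by group
    _ = a ^ 6 := by rw [a_pow_nine, inv_one, mul_one]

theorem closure_a_b : Subgroup.closure {a, b} = ⊤ := by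
  rw [← PresentedGroup.closure_range_of]
  congr
  ext
  simp [Fin.exists_fin_two, a, b, eq_comm]

theorem surjective_pow_mul_pow :
    Function.Surjective fun p : Fin 9 × Fin 3 => a ^ (p.1 : ℕ) * b ^ (p.2 : ℕ) :=
  surjective_pow_mul_pow_of_closure_pair_eq_top (by norm_num) (by norm_num) closure_a_b
    b_mul_a a_pow_nine b_pow_three

instance : Finite Γ := Finite.of_surjective _ surjective_pow_mul_pow

end Pol2

/-- `ℤ/9 ⋊ ℤ/3`, where `j : ℤ/3` acts on `ℤ/9` as multiplication by `4 ^ j`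
(well defined since `4 ^ 3 = 1` in `ℤ/9`). -/
def Metacyclic27 : Type := ZMod 9 × ZMod 3

namespace Metacyclic27

instance : DecidableEq Metacyclic27 := inferInstanceAs (DecidableEq (ZMod 9 × ZMod 3))

instance : Fintype Metacyclic27 := inferInstanceAs (Fintype (ZMod 9 × ZMod 3))

theorem four_pow_val_add (j l : ZMod 3) :
    (4 : ZMod 9) ^ (j + l).val = 4 ^ j.val * 4 ^ l.val := by
  revert j l; decide

instance : Group Metacyclic27 where
  mul x y := (x.1 + 4 ^ x.2.val * y.1, x.2 + y.2)
  one := ((0 : ZMod 9), (0 : ZMod 3))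
  inv x := (-(4 ^ (-x.2).val * x.1), -x.2)
  mul_assoc := by
    rintro ⟨s, j⟩ ⟨t, l⟩ ⟨u, p⟩
    show ((s + 4 ^ j.val * t + 4 ^ (j + l).val * u, j + l + p) : ZMod 9 × ZMod 3) =
      (s + 4 ^ j.val * (t + 4 ^ l.val * u), j + (l + p))
    rw [four_pow_val_add]
    exact Prod.ext (by ring) (add_assoc j l p)
  one_mul := by
    rintro ⟨s, j⟩
    show ((0 + 4 ^ (0 : ZMod 3).val * s, 0 + j) : ZMod 9 × ZMod 3) = (s, j)
    rw [ZMod.val_zero]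
    exact Prod.ext (by ring) (zero_add j)
  mul_one := by
    rintro ⟨s, j⟩
    show ((s + 4 ^ j.val * 0, j + 0) : ZMod 9 × ZMod 3) = (s, j)
    exact Prod.ext (by ring) (add_zero j)
  inv_mul_cancel := by
    rintro ⟨s, j⟩
    show ((-(4 ^ (-j).val * s) + 4 ^ (-j).val * s, -j + j) : ZMod 9 × ZMod 3) = (0, 0)
    exact Prod.ext (by ring) (neg_add_cancel j)

def x : Metacyclic27 := ((1 : ZMod 9), (0 : ZMod 3))

-- The image of `b`; not `(0, 1)`, since `b ^ 3 = a ^ 6` in `Γ`.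
def y : Metacyclic27 := ((2 : ZMod 9), (1 : ZMod 3))

theorem card_eq : Nat.card Metacyclic27 = 27 := by
  rw [Nat.card_eq_fintype_card]; rfl

theorem x_mul_y_ne_y_mul_x : x * y ≠ y * x := by decide

theorem pow_nine_eq_one : ∀ g : Metacyclic27, g ^ 9 = 1 := by decide

theorem orderOf_x : orderOf x = 9 :=
  orderOf_eq_prime_pow (p := 3) (n := 1) (by decide) (by decide)

theorem exponent_eq : Monoid.exponent Metacyclic27 = 9 :=
  Nat.dvd_antisymm (Monoid.exponent_dvd_of_forall_pow_eq_one pow_nine_eq_one)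
    (orderOf_x ▸ Monoid.order_dvd_exponent x)

theorem exists_x_pow_mul_y_pow_eq :
    ∀ g : Metacyclic27, ∃ i : Fin 9, ∃ j : Fin 3, x ^ (i : ℕ) * y ^ (j : ℕ) = g := by
  decide

end Metacyclic27

namespace Pol2

open Metacyclic27

theorem lift_rels_eq_one : ∀ r ∈ pol2Rels, FreeGroup.lift ![x, y] r = 1 := by
  simp only [pol2Rels, Set.mem_insert_iff, Set.mem_singleton_iff, forall_eq_or_imp, forall_eq,
    map_mul, map_pow, map_inv, FreeGroup.lift_apply_of]
  decide

def toMetacyclic27 : Γ →* Metacyclic27 := PresentedGroup.toGroup lift_rels_eq_one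

theorem toMetacyclic27_surjective : Function.Surjective toMetacyclic27 := by
  intro g
  obtain ⟨i, j, rfl⟩ := exists_x_pow_mul_y_pow_eq g
  exact ⟨a ^ (i : ℕ) * b ^ (j : ℕ), by simp [toMetacyclic27, a, b]⟩

theorem toMetacyclic27_bijective : Function.Bijective toMetacyclic27 := by
  refine (Nat.bijective_iff_surjective_and_card _).2 ⟨toMetacyclic27_surjective, ?_⟩
  rw [card_eq]
  refine le_antisymm ?_ (card_eq ▸ Nat.card_le_card_of_surjective _ toMetacyclic27_surjective)
  simpa using Nat.card_le_card_of_surjective _ surjective_pow_mul_pow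

noncomputable def mulEquivMetacyclic27 : Γ ≃* Metacyclic27 :=
  MulEquiv.ofBijective toMetacyclic27 toMetacyclic27_bijective

end Pol2

instance : Fintype Heis3 := inferInstanceAs (Fintype (ZMod 3 × ZMod 3 × ZMod 3))

instance : DecidableEq Heis3 := inferInstanceAs (DecidableEq (ZMod 3 × ZMod 3 × ZMod 3))

theorem Heis3.exponent_dvd_three : Monoid.exponent Heis3 ∣ 3 :=
  Monoid.exponent_dvd_of_forall_pow_eq_one (by decide)

/-- `Γ = ⟨a, b ∣ a⁹, b⁹, bab⁻¹ = a⁴, aba⁻¹ = b⁴⟩` has order exactly 27, is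
nonabelian, has exponent 9, and is not isomorphic to the Heisenberg group over
`ℤ/3ℤ` (which has exponent 3). -/
theorem stmt_3 :
    Nat.card (PresentedGroup pol2Rels) = 27 ∧
    ¬ (∀ x y : PresentedGroup pol2Rels, x * y = y * x) ∧
    Monoid.exponent (PresentedGroup pol2Rels) = 9 ∧
    IsEmpty (PresentedGroup pol2Rels ≃* Heis3) := by
  have e := Pol2.mulEquivMetacyclic27
  have hexp : Monoid.exponent Γ = 9 := by
    rw [Monoid.exponent_eq_of_mulEquiv e, Metacyclic27.exponent_eq]
  refine ⟨by rw [Nat.card_congr e.toEquiv, Metacyclic27.card_eq], fun hcomm => ?_, hexp,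
    ⟨fun f => ?_⟩⟩
  · exact Metacyclic27.x_mul_y_ne_y_mul_x (e.symm.injective (by simp [hcomm]))
  · have := Heis3.exponent_dvd_three
    rw [← Monoid.exponent_eq_of_mulEquiv f, hexp] at this
    norm_num at this
end

section
/- Let V = (ℤ/3ℤ)² with basis e₁, e₂, and let G be the set V × C₃ (C₃ = ⟨σ⟩ cyclic of order 3) with multiplication (ξ, g)(η, h) = (ξ + g·η + ψ(g,h), gh), where C₃ acts on V via the identification V ≅ ω(C₃) ⊗ C₃ with ω(C₃) the augmentation ideal of ℤ[C₃], and ψ(g,h) = (g−1) ⊗ h̄. Then the elements a = (0, σ) and b = (0, σ²) satisfy a⁹ = 1, b⁹ = 1, b a b⁻¹ = a⁴, and a b a⁻¹ = b⁴, and G is generated by a and b. -/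
/-- `V = ω(C₃) ⊗ ℤ/3ℤ ≅ (ℤ/3ℤ)²`, in the basis `e₁ = (σ-1)⊗σ̄`, `e₂ = (σ²-1)⊗σ̄`,
where `ω(C₃)` is the augmentation ideal of `ℤ[C₃]` (with ℤ-basis `σ-1`, `σ²-1`). -/
abbrev V3 : Type := ZMod 3 × ZMod 3

/-- The action of `σ^i ∈ C₃` on `V`, induced by left multiplication on `ω(C₃)`:
`σ·(σ-1) = (σ²-1)-(σ-1)` and `σ·(σ²-1) = -(σ-1)`, so `σ` sends
`x e₁ + y e₂` to `(-x-y) e₁ + x e₂`, and `σ²` sends it to `y e₁ + (-x-y) e₂`. -/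
def rho3 : ZMod 3 → V3 → V3 := fun i v =>
  if i = 0 then v else if i = 1 then (-v.1 - v.2, v.1) else (v.2, -v.1 - v.2)

/-- The cocycle `ψ(g, h) = (g - 1) ⊗ h̄`: since `h̄ = j·σ̄` for `h = σ^j`,
`ψ(σ^i, σ^j)` is `0` if `i = 0`, `j·e₁` if `i = 1`, and `j·e₂` if `i = 2`. -/
def psi3 : ZMod 3 → ZMod 3 → V3 := fun i j =>
  if i = 0 then 0 else if i = 1 then (j, 0) else ((0 : ZMod 3), j)

lemma zmod3_cases : ∀ i : ZMod 3, i = 0 ∨ i = 1 ∨ i = 2 := by decide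

lemma rho3_add (i : ZMod 3) (u v : V3) : rho3 i (u + v) = rho3 i u + rho3 i v := by
  simp only [rho3]
  split_ifs <;> refine Prod.ext ?_ ?_ <;> simp <;> ring

lemma rho3_comp (i j : ZMod 3) (v : V3) : rho3 i (rho3 j v) = rho3 (i + j) v := by
  rcases zmod3_cases i with hi | hi | hi <;> rcases zmod3_cases j with hj | hj | hj <;>
    subst hi <;> subst hj <;>
    simp [rho3, Prod.ext_iff,
      show ((1 : ZMod 3) + 1) = 2 from by decide, show ((1 : ZMod 3) + 2) = 0 from by decide,
      show ((2 : ZMod 3) + 1) = 0 from by decide, show ((2 : ZMod 3) + 2) = 1 from by decide,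
      show (2 : ZMod 3) ≠ 0 from by decide, show (2 : ZMod 3) ≠ 1 from by decide] <;>
    first
      | rfl
      | (constructor <;> ring)
      | ring

lemma rho3_zero_apply : ∀ v : V3, rho3 0 v = v := by decide

lemma rho3_zero_right : ∀ i : ZMod 3, rho3 i 0 = 0 := by decide

lemma psi3_zero_left : ∀ j : ZMod 3, psi3 0 j = 0 := by decide

lemma psi3_zero_right : ∀ i : ZMod 3, psi3 i 0 = 0 := by decide

lemma psi3_cocycle : ∀ i j k : ZMod 3,
    psi3 i j + psi3 (i + j) k = rho3 i (psi3 j k) + psi3 i (j + k) := by decide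

lemma rho3_neg (j : ZMod 3) (v : V3) : rho3 j (-v) = -rho3 j v := by
  have h := rho3_add j v (-v)
  rw [add_neg_cancel, rho3_zero_right] at h
  exact (neg_eq_of_add_eq_zero_right h.symm).symm

/-- The group `G = V × C₃` with `(ξ, g)(η, h) = (ξ + g·η + ψ(g,h), gh)`, where
`C₃ = ⟨σ⟩` is written as `ZMod 3` (`σ^i ↔ i`). -/
def G4 : Type := V3 × ZMod 3

instance : DecidableEq G4 := inferInstanceAs (DecidableEq (V3 × ZMod 3))
instance : Fintype G4 := inferInstanceAs (Fintype (V3 × ZMod 3))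

instance : Group G4 where
  mul x y := (x.1 + rho3 x.2 y.1 + psi3 x.2 y.2, x.2 + y.2)
  one := ((0 : V3), (0 : ZMod 3))
  inv x := (rho3 (-x.2) (-(x.1 + psi3 x.2 (-x.2))), -x.2)
  mul_assoc := by
    rintro ⟨x, i⟩ ⟨y, j⟩ ⟨z, k⟩
    show ((x + rho3 i y + psi3 i j + rho3 (i + j) z + psi3 (i + j) k, i + j + k) :
        V3 × ZMod 3) =
      (x + rho3 i (y + rho3 j z + psi3 j k) + psi3 i (j + k), i + (j + k))
    refine Prod.ext ?_ (add_assoc i j k)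
    rw [rho3_add, rho3_add, rho3_comp]
    have h := psi3_cocycle i j k
    linear_combination h
  one_mul := by
    rintro ⟨v, j⟩
    show (((0 : V3) + rho3 0 v + psi3 0 j, (0 : ZMod 3) + j) : V3 × ZMod 3) = (v, j)
    rw [rho3_zero_apply, psi3_zero_left, add_zero, zero_add, zero_add]
  mul_one := by
    rintro ⟨v, j⟩
    show ((v + rho3 j 0 + psi3 j 0, j + (0 : ZMod 3)) : V3 × ZMod 3) = (v, j)
    rw [rho3_zero_right, psi3_zero_right, add_zero, add_zero, add_zero]
  inv_mul_cancel := by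
    rintro ⟨v, j⟩
    show ((rho3 (-j) (-(v + psi3 j (-j))) + rho3 (-j) v + psi3 (-j) j, -j + j) :
        V3 × ZMod 3) = ((0 : V3), (0 : ZMod 3))
    refine Prod.ext ?_ (neg_add_cancel j)
    rw [rho3_neg, rho3_add]
    have h : ∀ i : ZMod 3, psi3 (-i) i = rho3 (-i) (psi3 i (-i)) := by decide
    rw [h j]
    ring

/-! The four relations are finite computations in this group of order 27. For generation: `a`
has order 9, so `⟨a⟩` has prime index 3, and `b ∉ ⟨a⟩` because `b a b⁻¹ = a⁴ ≠ a`; a subgroup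
strictly containing one of prime index is everything. -/

namespace Subgroup

variable {G : Type*} [Group G]

theorem eq_top_of_lt_of_index_prime {K H : Subgroup G} {p : ℕ} (hp : p.Prime)
    (hK : K.index = p) (hKH : K < H) : H = ⊤ := by
  have : K.FiniteIndex := ⟨hK ▸ hp.ne_zero⟩
  have hdvd : H.index ∣ p := hK ▸ index_dvd_of_le hKH.le
  have hlt : H.index < p := hK ▸ index_strictAnti hKH
  rcases hp.eq_one_or_self_of_dvd _ hdvd with h | h
  · exact index_eq_one.mp h
  · exact absurd h hlt.ne

theorem closure_pair_eq_top_of_index_zpowers_prime {a b : G} {p : ℕ} (hp : p.Prime)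
    (ha : (zpowers a).index = p) (hb : b ∉ zpowers a) : closure {a, b} = ⊤ :=
  eq_top_of_lt_of_index_prime hp ha <| SetLike.lt_iff_le_and_exists.mpr
    ⟨zpowers_le.mpr (subset_closure (by simp)), b, subset_closure (by simp), hb⟩

theorem notMem_zpowers_of_mul_mul_inv_ne {a b : G} (h : b * a * b⁻¹ ≠ a) : b ∉ zpowers a := by
  rintro ⟨k, rfl⟩
  exact h (by rw [(Commute.zpow_self a k).eq, mul_inv_cancel_right])

end Subgroup

theorem card_G4 : Nat.card G4 = 3 ^ 3 := by
  rw [Nat.card_eq_fintype_card]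
  rfl

/-- In `G`, the elements `a = (0, σ)` and `b = (0, σ²)` satisfy `a⁹ = b⁹ = 1`,
`b a b⁻¹ = a⁴`, `a b a⁻¹ = b⁴`, and generate `G`. -/
theorem stmt_4 (a b : G4) (ha : a = ((0 : V3), (1 : ZMod 3)))
    (hb : b = ((0 : V3), (2 : ZMod 3))) :
    a ^ 9 = 1 ∧ b ^ 9 = 1 ∧ b * a * b⁻¹ = a ^ 4 ∧ a * b * a⁻¹ = b ^ 4 ∧
      Subgroup.closure ({a, b} : Set G4) = ⊤ := by
  have ha9 : a ^ 9 = 1 := by subst ha; decide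
  have hb9 : b ^ 9 = 1 := by subst hb; decide
  have hconj_ba : b * a * b⁻¹ = a ^ 4 := by subst ha hb; decide
  have hconj_ab : a * b * a⁻¹ = b ^ 4 := by subst ha hb; decide
  have ha3 : a ^ 3 ≠ 1 := by subst ha; decide
  have hord : orderOf a = 3 ^ 2 := orderOf_eq_prime_pow (p := 3) (n := 1) ha3 ha9
  have hindex : (Subgroup.zpowers a).index = 3 := by
    have h := (Subgroup.zpowers a).index_mul_card
    rw [Nat.card_zpowers, hord, card_G4] at h
    omega
  have hb_notMem : b ∉ Subgroup.zpowers a :=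
    Subgroup.notMem_zpowers_of_mul_mul_inv_ne (by
      rw [hconj_ba, pow_succ, Ne, mul_eq_right]
      exact ha3)
  exact ⟨ha9, hb9, hconj_ba, hconj_ab,
    Subgroup.closure_pair_eq_top_of_index_zpowers_prime Nat.prime_three hindex hb_notMem⟩
end

section
/- Let F = 𝔽₃(t) be the rational function field over 𝔽₃ and define A, B ∈ M₃(F) by A = [[0, 0, 1/t], [2/t, 0, 0], [2t², 2t², 0]] and B = [[0, 2t, 0], [0, 0, 2/t²], [t, 0, t]]. Then det(A) = det(B) = 1 and A, B satisfy (BA)³ = 1, (AB⁻¹A)³ = 1, and (BA)(AB⁻¹A) = (AB⁻¹A)(BA) in SL₃(F). -/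
/-!
Both `B * A` and `A * B⁻¹ * A` turn out to be lower unitriangular, i.e. they lie in the
Heisenberg group of matrices `[[1, 0, 0], [x, 1, 0], [z, y, 1]]`, whose law is
`(x, y, z) * (x', y', z') = (x + x', y + y', z + z' + y x')`. Hence cubes are `(3x, 3y, 3z + 3xy)`,
trivial in characteristic 3, and `(x, y, z)`, `(x', y', z')` commute exactly when `y x' = y' x`.
-/

instance : Fact (Nat.Prime 3) := ⟨by norm_num⟩

def heisenberg {R : Type*} [CommRing R] (x y z : R) : Matrix (Fin 3) (Fin 3) R :=
  !![1, 0, 0; x, 1, 0; z, y, 1]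

section Heisenberg

variable {R : Type*} [CommRing R]

theorem heisenberg_zero : heisenberg (0 : R) 0 0 = 1 := by
  ext i j
  fin_cases i <;> fin_cases j <;> rfl

theorem heisenberg_mul (x y z x' y' z' : R) :
    heisenberg x y z * heisenberg x' y' z' =
      heisenberg (x + x') (y + y') (z + z' + y * x') := by
  ext i j
  fin_cases i <;> fin_cases j <;> simp [heisenberg, Matrix.mul_apply, Fin.sum_univ_three]
  ring

theorem heisenberg_commute {x y z x' y' z' : R} (h : y * x' = y' * x) :
    Commute (heisenberg x y z) (heisenberg x' y' z') := by
  rw [Commute, SemiconjBy, heisenberg_mul, heisenberg_mul, h, add_comm x, add_comm y, add_comm z]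

theorem heisenberg_pow_three [CharP R 3] (x y z : R) : heisenberg x y z ^ 3 = 1 := by
  have h3 : (3 : R) = 0 := CharP.cast_eq_zero R 3
  rw [pow_three, heisenberg_mul, heisenberg_mul, ← heisenberg_zero]
  congr 1
  · linear_combination x * h3
  · linear_combination y * h3
  · linear_combination (z + y * x) * h3

end Heisenberg

section Generators

variable {K : Type*} [Field K] [CharP K 3] {t : K}

variable (t) in
def matA : Matrix (Fin 3) (Fin 3) K := !![0, 0, 1 / t; 2 / t, 0, 0; 2 * t ^ 2, 2 * t ^ 2, 0]

variable (t) in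
def matB : Matrix (Fin 3) (Fin 3) K := !![0, 2 * t, 0; 0, 0, 2 / t ^ 2; t, 0, t]

theorem det_matA (ht : t ≠ 0) : (matA t).det = 1 := by
  rw [Matrix.det_fin_three]
  simp only [matA, one_div, Matrix.of_apply, Matrix.cons_val', Matrix.cons_val_zero,
    Matrix.cons_val_fin_one, Matrix.cons_val_one, Matrix.cons_val, mul_zero, zero_mul, sub_self,
    add_zero, zero_add, sub_zero]
  field_simp
  reduce_mod_char!

theorem det_matB (ht : t ≠ 0) : (matB t).det = 1 := by
  rw [Matrix.det_fin_three]
  simp only [matB, Matrix.of_apply, Matrix.cons_val', Matrix.cons_val_zero,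
    Matrix.cons_val_fin_one, Matrix.cons_val_one, Matrix.cons_val, mul_zero, zero_mul, sub_self,
    zero_add, add_zero, sub_zero]
  field_simp
  reduce_mod_char!

theorem inv_matB (ht : t ≠ 0) :
    (matB t)⁻¹ = !![0, t ^ 2, 1 / t; 2 / t, 0, 0; 0, 2 * t ^ 2, 0] := by
  refine Matrix.inv_eq_right_inv ?_
  ext i j
  fin_cases i <;> fin_cases j <;> simp [matB, Matrix.mul_apply, Fin.sum_univ_three]
  all_goals field_simp
  all_goals reduce_mod_char!

theorem matB_mul_matA (ht : t ≠ 0) :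
    matB t * matA t = heisenberg 1 (2 * t ^ 3) (2 * t ^ 3) := by
  ext i j
  fin_cases i <;> fin_cases j <;>
    simp [matA, matB, heisenberg, Matrix.mul_apply, Fin.sum_univ_three]
  all_goals field_simp
  all_goals reduce_mod_char!

theorem matA_mul_inv_matB_mul_matA (ht : t ≠ 0) :
    matA t * (matB t)⁻¹ * matA t = heisenberg 2 (t ^ 3) (2 * t ^ 3) := by
  rw [inv_matB ht]
  ext i j
  fin_cases i <;> fin_cases j <;> simp [matA, heisenberg, Matrix.mul_apply, Fin.sum_univ_three]
  all_goals field_simp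
  all_goals reduce_mod_char!

theorem commute_matB_mul_matA (ht : t ≠ 0) :
    Commute (matB t * matA t) (matA t * (matB t)⁻¹ * matA t) := by
  rw [matB_mul_matA ht, matA_mul_inv_matB_mul_matA ht]
  exact heisenberg_commute (by linear_combination t ^ 3 * (CharP.cast_eq_zero K 3))

end Generators

open RatFunc in
/-- The matrices `A`, `B` over `𝔽₃(t)` have determinant 1 and satisfy the
relators `(ba)³`, `(ab⁻¹a)³`, `[ba, ab⁻¹a]` of `Γ`, hence `a ↦ A`, `b ↦ B`
defines a representation `Γ → SL₃(𝔽₃(t))`. -/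
theorem stmt_12 (t : RatFunc (ZMod 3)) (ht : t = RatFunc.X)
    (A B : Matrix (Fin 3) (Fin 3) (RatFunc (ZMod 3)))
    (hA : A = !![0, 0, 1 / t; 2 / t, 0, 0; 2 * t ^ 2, 2 * t ^ 2, 0])
    (hB : B = !![0, 2 * t, 0; 0, 0, 2 / t ^ 2; t, 0, t]) :
    A.det = 1 ∧ B.det = 1 ∧ (B * A) ^ 3 = 1 ∧ (A * B⁻¹ * A) ^ 3 = 1 ∧
      (B * A) * (A * B⁻¹ * A) = (A * B⁻¹ * A) * (B * A) := by
  have ht0 : t ≠ 0 := ht ▸ RatFunc.X_ne_zero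
  obtain rfl : A = matA t := hA
  obtain rfl : B = matB t := hB
  refine ⟨det_matA ht0, det_matB ht0, ?_, ?_, (commute_matB_mul_matA ht0).eq⟩
  · rw [matB_mul_matA ht0, heisenberg_pow_three]
  · rw [matA_mul_inv_matB_mul_matA ht0, heisenberg_pow_three]
end
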